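/- arXiv:2202.06897 — 3 statements merged into one kernel-verified Lean document; each statement's English description precedes it below -/
import Mathlib

section
/- Graviton stability: let f(q) ∈ q ℤ[[q]] have order α > 0, and define I^f_N(q) = Σ_λ (f_λ(q)/z_λ) Σ_{μ: ℓ(μ)≤N} χ^μ(λ)², where f_λ(q) = ∏_j f(q^{λ_j}) and the outer sum is over all partitions λ. Then the coefficient of q^ℓ in I^f_N(q) equals the coefficient of q^ℓ in I^f_∞(q) = ∏_{k≥1} 1/(1 - f(q^k)) for all ℓ ≤ αN. -/
open scoped Classical

noncomputable section

/-- `substPowerSeries f k` is the formal power series `f(q^k)`. -/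
def substPowerSeries (f : PowerSeries ℤ) (k : ℕ) : PowerSeries ℤ :=
  PowerSeries.mk fun m => if k ∣ m then PowerSeries.coeff (m / k) f else 0

/-- For a partition `λ = 1^{r_1} 2^{r_2} ⋯`, the centralizer size
`z_λ = ∏_i r_i! · i^{r_i}`, as a rational number. -/
def zOf {m : ℕ} (lam : m.Partition) : ℚ :=
  ((lam.parts.toFinsupp.prod fun i r => r.factorial * i ^ r : ℕ) : ℚ)

/-- `f_λ(q) = ∏_j f(q^{λ_j})`. -/
def fProd (f : PowerSeries ℤ) {m : ℕ} (lam : m.Partition) : PowerSeries ℤ :=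
  (lam.parts.map fun j => substPowerSeries f j).prod

/-! For `ℓ ≤ αN`, a partition `λ ⊢ n` contributes to the coefficient of `q^ℓ` only if
`αn ≤ ℓ`, since `f_λ` has order `≥ αn`. Then `n ≤ N`, so every `μ ⊢ n` has `ℓ(μ) ≤ N`, and
column orthogonality turns the inner sum into `z_λ`: the coefficient is that of `Σ_λ f_λ`.
The sum `G_K` of `f_λ` over partitions with parts `≤ K` satisfies `G_K = G_{K-1} + f(q^K) G_K`
(split off one part equal to `K`), so `G_K ∏_{k ≤ K} (1 - f(q^k)) = 1`, and `G_K` agrees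
with `I^f_∞` below `q^{K+1}`. -/

open PowerSeries Finset PowerSeries.WithPiTopology

theorem PowerSeries.le_order_multiset_prod {R : Type*} [CommSemiring R] (s : Multiset R⟦X⟧) :
    (s.map order).sum ≤ s.prod.order := by
  induction s using Multiset.induction with
  | empty => simp
  | cons φ s ih => grw [Multiset.map_cons, Multiset.sum_cons, Multiset.prod_cons, ih, le_order_mul]

theorem Nat.Partition.card_parts_le {n : ℕ} (p : n.Partition) : p.parts.card ≤ n := by
  simpa [p.parts_sum] using Multiset.card_nsmul_le_sum (a := 1) fun _ hi => p.parts_pos hi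

theorem Nat.Partition.mul_le_order_prod_map {R : Type*} [CommSemiring R] {g : ℕ → R⟦X⟧}
    {c : ℕ∞} (hg : ∀ k, k * c ≤ (g k).order) {n : ℕ} (p : n.Partition) :
    n * c ≤ (p.parts.map g).prod.order :=
  calc (n : ℕ∞) * c = (p.parts.map fun k : ℕ => (k : ℕ∞) * c).sum := by
        rw [Multiset.sum_map_mul_right, ← Nat.cast_multiset_sum, p.parts_sum]
    _ ≤ ((p.parts.map g).map order).sum := by
        rw [Multiset.map_map]; exact Multiset.sum_map_le_sum_map _ _ fun k _ => hg k
    _ ≤ _ := le_order_multiset_prod _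

theorem mul_order_le_order_substPowerSeries (f : PowerSeries ℤ) (k : ℕ) :
    k * f.order ≤ (substPowerSeries f k).order := by
  refine le_order _ _ fun i hi => ?_
  simp only [substPowerSeries, coeff_mk]
  split_ifs with hdvd
  · obtain ⟨j, rfl⟩ := hdvd
    rcases k.eq_zero_or_pos with rfl | hk
    · simp at hi
    · rw [Nat.mul_div_cancel_left j hk]
      refine coeff_of_lt_order _ (lt_of_not_ge fun h => hi.not_ge ?_)
      push_cast
      gcongr
  · rfl

theorem PowerSeries.coeff_eq_of_coeff_mul_eq_of_isUnit {R : Type*} [CommRing R]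
    {φ ψ u : R⟦X⟧} (hu : IsUnit u) {L : ℕ} (h : ∀ d ≤ L, coeff d (φ * u) = coeff d (ψ * u)) :
    ∀ d ≤ L, coeff d φ = coeff d ψ := by
  have hdvd : X ^ (L + 1) ∣ (φ - ψ) * u :=
    X_pow_dvd_iff.2 fun d hd => by rw [sub_mul, map_sub, h d (by omega), sub_self]
  intro d hd
  simpa [sub_eq_zero] using X_pow_dvd_iff.1 (hu.dvd_mul_right.1 hdvd) d (by omega)

section BoundedParts

variable {R : Type*} [CommRing R] (g : ℕ → R⟦X⟧)

def boundedPartsSum (K n : ℕ) : R⟦X⟧ :=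
  ∑ p ∈ Nat.Partition.restricted n (· ≤ K), (p.parts.map g).prod

theorem boundedPartsSum_of_le {K n : ℕ} (h : n ≤ K) :
    boundedPartsSum g K n = ∑ p : n.Partition, (p.parts.map g).prod := by
  rw [boundedPartsSum, Nat.Partition.restricted,
    filter_true_of_mem fun p _ i hi => (Nat.Partition.le_of_mem_parts hi).trans h]

theorem boundedPartsSum_zero_left (n : ℕ) : boundedPartsSum g 0 n = if n = 0 then 1 else 0 := by
  split_ifs with hn
  · subst hn
    rw [boundedPartsSum_of_le g le_rfl, Fintype.sum_unique]
    simp [Nat.Partition.partition_zero_parts]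
  · refine sum_eq_zero fun p hp => ?_
    obtain ⟨i, hi⟩ := Multiset.exists_mem_of_ne_zero (s := p.parts) fun h0 =>
      hn (by rw [← p.parts_sum, h0, Multiset.sum_zero])
    exact absurd ((mem_filter.1 hp).2 i hi) (p.parts_pos hi).not_ge

theorem Nat.Partition.sum_restricted_filter_mem_parts {M : Type*} [AddCommMonoid M]
    (F : Multiset ℕ → M) {K n : ℕ} (h : K + 1 ≤ n) :
    ∑ p ∈ (Nat.Partition.restricted n (· ≤ K + 1)).filter (K + 1 ∈ ·.parts), F p.parts =
      ∑ q ∈ Nat.Partition.restricted (n - (K + 1)) (· ≤ K + 1), F ((K + 1) ::ₘ q.parts) := by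
  let e := Nat.Partition.partitionWithPartEquiv (Nat.succ_pos K) h
  refine sum_bij' (fun p hp => e ⟨p, (mem_filter.1 hp).2⟩) (fun q _ => (e.symm q).1)
    ?_ ?_ ?_ ?_ ?_
  · intro p hp
    simp only [Nat.Partition.restricted, mem_filter, mem_univ, true_and] at hp ⊢
    intro i hi
    rw [Nat.Partition.partitionWithPartEquiv_apply_parts] at hi
    exact hp.1 i (Multiset.mem_of_mem_erase hi)
  · intro q hq
    simp only [Nat.Partition.restricted, mem_filter, mem_univ, true_and] at hq ⊢
    rw [Nat.Partition.partitionWithPartEquiv_symm_apply_parts]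
    refine ⟨fun i hi => ?_, Multiset.mem_cons_self _ _⟩
    rcases Multiset.mem_cons.1 hi with rfl | hi
    exacts [le_rfl, hq i hi]
  · intro p hp
    simp [e]
  · intro q hq
    simp [e]
  · intro p hp
    rw [Nat.Partition.partitionWithPartEquiv_apply_parts, Multiset.cons_erase (mem_filter.1 hp).2]

theorem boundedPartsSum_succ (K n : ℕ) :
    boundedPartsSum g (K + 1) n = boundedPartsSum g K n +
      if K + 1 ≤ n then g (K + 1) * boundedPartsSum g (K + 1) (n - (K + 1)) else 0 := by
  rw [boundedPartsSum, ← sum_filter_not_add_sum_filter _ (K + 1 ∈ ·.parts)]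
  congr 1
  · rw [boundedPartsSum, Nat.Partition.restricted, Nat.Partition.restricted, filter_filter]
    refine sum_congr (filter_congr fun p _ =>
      ⟨fun ⟨hle, hnot⟩ i hi => ?_, fun hle => ⟨?_, ?_⟩⟩) fun _ _ => rfl
    · exact Nat.le_of_lt_succ ((hle i hi).lt_of_ne fun hi' => hnot (hi' ▸ hi))
    · exact fun i hi => (hle i hi).trans K.le_succ
    · exact fun hmem => (hle _ hmem).not_gt K.lt_succ_self
  · split_ifs with h
    · rw [Nat.Partition.sum_restricted_filter_mem_parts (fun s => (s.map g).prod) h,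
        boundedPartsSum, mul_sum]
      simp only [Multiset.map_cons, Multiset.prod_cons]
    · exact sum_eq_zero fun p hp => absurd (Nat.Partition.le_of_mem_parts (mem_filter.1 hp).2) h

variable {g} in
theorem coeff_boundedPartsSum_of_lt (hg : ∀ k : ℕ, (k : ℕ∞) ≤ (g k).order) {K n d : ℕ}
    (hd : d < n) : coeff d (boundedPartsSum g K n) = 0 := by
  rw [boundedPartsSum, map_sum]
  refine sum_eq_zero fun p _ => coeff_of_lt_order _ ?_
  have hord := Nat.Partition.mul_le_order_prod_map (c := 1) (by simpa using hg) p
  rw [mul_one] at hord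
  exact lt_of_lt_of_le (by exact_mod_cast hd) hord

end BoundedParts

section BoundedPartsGenFun

variable {R : Type*} [CommRing R] [TopologicalSpace R] {g : ℕ → R⟦X⟧}

variable (g) in
def boundedPartsGenFun (K : ℕ) : R⟦X⟧ :=
  ∑' n, boundedPartsSum g K n

variable (g) in
theorem boundedPartsGenFun_zero : boundedPartsGenFun g 0 = 1 := by
  simp only [boundedPartsGenFun, boundedPartsSum_zero_left, tsum_ite_eq]

theorem hasSum_coeff_boundedPartsSum (hg : ∀ k : ℕ, (k : ℕ∞) ≤ (g k).order) (K d : ℕ) :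
    HasSum (fun n => coeff d (boundedPartsSum g K n))
      (∑ n ∈ range (d + 1), coeff d (boundedPartsSum g K n)) :=
  hasSum_sum_of_ne_finset_zero fun _ hn =>
    coeff_boundedPartsSum_of_lt hg (by simpa using hn)

theorem summable_boundedPartsSum (hg : ∀ k : ℕ, (k : ℕ∞) ≤ (g k).order) (K : ℕ) :
    Summable (boundedPartsSum g K) :=
  (summable_iff_summable_coeff _).2 fun d => (hasSum_coeff_boundedPartsSum hg K d).summable

variable [T2Space R]

theorem coeff_boundedPartsGenFun (hg : ∀ k : ℕ, (k : ℕ∞) ≤ (g k).order) (K d : ℕ) :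
    coeff d (boundedPartsGenFun g K) = ∑ n ∈ range (d + 1), coeff d (boundedPartsSum g K n) :=
  ((hasSum_iff_hasSum_coeff _).1 (summable_boundedPartsSum hg K).hasSum d).unique
    (hasSum_coeff_boundedPartsSum hg K d)

variable [IsTopologicalRing R]

theorem boundedPartsGenFun_succ (hg : ∀ k : ℕ, (k : ℕ∞) ≤ (g k).order) (K : ℕ) :
    boundedPartsGenFun g (K + 1) =
      boundedPartsGenFun g K + g (K + 1) * boundedPartsGenFun g (K + 1) := by
  set F : ℕ → R⟦X⟧ := fun n =>
    if K + 1 ≤ n then g (K + 1) * boundedPartsSum g (K + 1) (n - (K + 1)) else 0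
  have hshift : (fun n => F (n + (K + 1))) = fun n => g (K + 1) * boundedPartsSum g (K + 1) n := by
    funext n
    simp only [F, Nat.le_add_left, if_true, Nat.add_sub_cancel]
  have hFsum : Summable (fun n => F (n + (K + 1))) :=
    hshift ▸ (summable_boundedPartsSum hg (K + 1)).mul_left _
  have hF : ∑' n, F n = g (K + 1) * boundedPartsGenFun g (K + 1) := by
    rw [← hFsum.sum_add_tsum_nat_add', sum_eq_zero fun n hn => if_neg (by simpa using hn),
      zero_add, hshift, (summable_boundedPartsSum hg (K + 1)).tsum_mul_left, boundedPartsGenFun]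
  rw [← hF, boundedPartsGenFun, boundedPartsGenFun, ← (summable_boundedPartsSum hg K).tsum_add
    ((summable_nat_add_iff (K + 1)).1 hFsum)]
  exact tsum_congr (boundedPartsSum_succ g K)

theorem boundedPartsGenFun_mul_prod_one_sub (hg : ∀ k : ℕ, (k : ℕ∞) ≤ (g k).order) (K : ℕ) :
    boundedPartsGenFun g K * ∏ k ∈ Icc 1 K, (1 - g k) = 1 := by
  induction K with
  | zero => simp [boundedPartsGenFun_zero]
  | succ K ih =>
    rw [prod_Icc_succ_top (by omega)]
    linear_combination (∏ k ∈ Icc 1 K, (1 - g k)) * boundedPartsGenFun_succ hg K + ih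

end BoundedPartsGenFun

theorem isUnit_prod_one_sub {R : Type*} [CommRing R] {g : ℕ → R⟦X⟧}
    (hg : ∀ k : ℕ, (k : ℕ∞) ≤ (g k).order) (K : ℕ) : IsUnit (∏ k ∈ Icc 1 K, (1 - g k)) := by
  refine isUnit_iff_constantCoeff.2 ?_
  rw [map_prod, prod_eq_one fun k hk => ?_]
  · exact isUnit_one
  · rw [map_sub, map_one, (one_le_order_iff_constCoeff_eq_zero).1, sub_zero]
    exact le_trans (by exact_mod_cast (mem_Icc.1 hk).1) (hg k)

theorem zOf_pos {n : ℕ} (lam : n.Partition) : 0 < zOf lam := by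
  rw [zOf, Nat.cast_pos, Finsupp.prod]
  refine prod_pos fun i hi => ?_
  have : 0 < i := lam.parts_pos (by simpa using hi)
  positivity

theorem coeff_fProd_of_lt (f : PowerSeries ℤ) {n ℓ : ℕ} (lam : n.Partition)
    (h : (ℓ : ℕ∞) < n * f.order) : coeff ℓ (fProd f lam) = 0 :=
  coeff_of_lt_order _ (h.trans_le
    (Nat.Partition.mul_le_order_prod_map (mul_order_le_order_substPowerSeries f) lam))

theorem sum_sq_filter_card_parts_le {n N : ℕ} (hn : n ≤ N) (χ : n.Partition → n.Partition → ℤ)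
    (lam : n.Partition) :
    ∑ μ ∈ univ.filter fun μ : n.Partition => μ.parts.card ≤ N, (χ μ lam : ℚ) ^ 2 =
      ∑ μ, (χ μ lam : ℚ) * χ μ lam := by
  rw [filter_true_of_mem fun μ _ => μ.card_parts_le.trans hn]
  simp only [sq]

/-- **Graviton stability.**
Let `f(q) ∈ q ℤ[[q]]` have order `α > 0`, let `χ^μ(λ)` (`μ, λ` partitions of `n`, for
each `n`) be the character table of the symmetric groups — encoded by the second
orthogonality relation `Σ_μ χ^μ(λ) χ^μ(λ') = z_λ δ_{λ,λ'}` — and define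
`I^f_N(q) = Σ_λ (f_λ(q)/z_λ) Σ_{μ : ℓ(μ) ≤ N} χ^μ(λ)²`, the outer sum over all
partitions `λ` of all sizes (only `|λ| ≤ ℓ` contributes to the coefficient of `q^ℓ`,
since `f_λ` has order `≥ α|λ| ≥ |λ|`).  Let `I^f_∞(q) = ∏_{k≥1} 1/(1 − f(q^k))` be the
multi-graviton index, encoded by the power series `P` via stabilization of partial
products.  Then the coefficient of `q^ℓ` in `I^f_N` equals that of `I^f_∞`
for all `ℓ ≤ αN`. -/
theorem graviton_stability (f : PowerSeries ℤ) (α N : ℕ) (hα : 0 < α)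
    (hord : f.order = α)
    (χ : ∀ n : ℕ, n.Partition → n.Partition → ℤ)
    (hχ : ∀ (n : ℕ) (lam lam' : n.Partition),
      ∑ μ : n.Partition, (χ n μ lam : ℚ) * χ n μ lam' =
        if lam = lam' then zOf lam else 0)
    (P : PowerSeries ℤ)
    (hP : ∀ K : ℕ, ∀ d ≤ K,
      PowerSeries.coeff d (P * ∏ k ∈ Finset.Icc 1 K, (1 - substPowerSeries f k)) =
        if d = 0 then 1 else 0) :
    ∀ ℓ ≤ α * N,
      (∑ n ∈ Finset.range (ℓ + 1), ∑ lam : n.Partition,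
        ((PowerSeries.coeff (R := ℤ) ℓ (fProd f lam) : ℚ) / zOf lam) *
          ∑ μ ∈ Finset.univ.filter fun μ : n.Partition => μ.parts.card ≤ N,
            (χ n μ lam : ℚ) ^ 2) =
      ((PowerSeries.coeff ℓ P : ℤ) : ℚ) := by
  intro ℓ hℓ
  have hg : ∀ k : ℕ, (k : ℕ∞) ≤ (substPowerSeries f k).order := fun k =>
    le_trans (by rw [hord]; exact_mod_cast Nat.le_mul_of_pos_right k hα)
      (mul_order_le_order_substPowerSeries f k)
  have hPG : coeff ℓ P = coeff ℓ (boundedPartsGenFun (substPowerSeries f) ℓ) :=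
    coeff_eq_of_coeff_mul_eq_of_isUnit (isUnit_prod_one_sub hg ℓ) (fun d hd => by
      rw [hP ℓ d hd, boundedPartsGenFun_mul_prod_one_sub hg, coeff_one]) ℓ le_rfl
  rw [hPG, coeff_boundedPartsGenFun hg, Int.cast_sum]
  refine sum_congr rfl fun n hn => ?_
  rw [boundedPartsSum_of_le _ (Nat.lt_succ_iff.1 (mem_range.1 hn)), map_sum, Int.cast_sum]
  refine sum_congr rfl fun lam _ => ?_
  change _ = ((coeff ℓ (fProd f lam) : ℤ) : ℚ)
  by_cases hn : α * n ≤ ℓ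
  · have hnN : n ≤ N := Nat.le_of_mul_le_mul_left (hn.trans hℓ) hα
    rw [sum_sq_filter_card_parts_le hnN, hχ, if_pos rfl, div_mul_cancel₀ _ (zOf_pos lam).ne']
  · rw [coeff_fProd_of_lt f lam (by rw [hord]; exact_mod_cast (by linarith : ℓ < n * α))]
    simp only [Int.cast_zero, zero_div, zero_mul]

end
end

section
/- Euler's identity: (x; q)_∞ := ∏_{k=0}^∞ (1 − x q^k) = Σ_{m=0}^∞ (−1)^m q^{m(m−1)/2} x^m / (q)_m, where (q)_m = ∏_{j=1}^m (1 − q^j), as an identity of formal power series in x over ℤ[[q]]. -/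
/-!
Write `P_K = (x;q)_K` for the partial products and `a_m = [x^m] F`. Peeling off the factor
`1 - x` gives `P_{K+1}(x) = (1 - x) P_K(qx)`, so
`[x^{m+1}] P_{K+1} = q^{m+1} [x^{m+1}] P_K - q^m [x^m] P_K`.
Since `a_m ≡ [x^m] P_K` modulo `q^K` for every `K`, the limit inherits the recurrence
`(1 - q^{m+1}) a_{m+1} = -q^m a_m`, and with `a_0 = 1` it telescopes to the claim.
-/

open PowerSeries Finset

namespace PowerSeries

variable {R : Type*} [CommRing R]

theorem eq_of_forall_X_pow_dvd_sub {f g : R⟦X⟧} (h : ∀ K, X ^ K ∣ f - g) : f = g := by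
  ext d
  simpa [sub_eq_zero] using X_pow_dvd_iff.mp (h (d + 1)) d (lt_add_one d)

theorem rescale_C (a b : R) : rescale a (C b) = C b := by
  ext n
  rw [coeff_rescale, coeff_C]
  split_ifs with hn <;> simp [hn]

variable (R) in
/-- `(x;q)_K` in `R⟦q⟧⟦x⟧`: the outer variable is `x`, the coefficients are series in `q`. -/
noncomputable def qPochhammer (K : ℕ) : R⟦X⟧⟦X⟧ :=
  ∏ k ∈ range K, (1 - C (X ^ k) * X)

theorem coeff_zero_qPochhammer (K : ℕ) : coeff 0 (qPochhammer R K) = 1 := by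
  simp [qPochhammer, coeff_zero_eq_constantCoeff, map_prod]

theorem qPochhammer_succ (K : ℕ) :
    qPochhammer R (K + 1) = (1 - X) * rescale X (qPochhammer R K) := by
  have rescale_factor (k : ℕ) :
      rescale (X : R⟦X⟧) (1 - C (X ^ k) * X) = 1 - C (X ^ (k + 1)) * X := by
    rw [map_sub, map_one, map_mul, rescale_C, rescale_X, pow_succ, map_mul, mul_assoc]
  rw [qPochhammer, prod_range_succ', qPochhammer, map_prod]
  simp only [rescale_factor, pow_zero, map_one, one_mul]
  ring

theorem coeff_succ_qPochhammer_succ (K m : ℕ) :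
    coeff (m + 1) (qPochhammer R (K + 1)) =
      X ^ (m + 1) * coeff (m + 1) (qPochhammer R K) - X ^ m * coeff m (qPochhammer R K) := by
  rw [qPochhammer_succ, sub_mul, one_mul, map_sub, coeff_succ_X_mul, coeff_rescale, coeff_rescale]

section Limit

variable {F : R⟦X⟧⟦X⟧} (hF : ∀ K m, X ^ K ∣ coeff m F - coeff m (qPochhammer R K))
include hF

theorem coeff_zero_eq_one_of_qPochhammer_limit : coeff 0 F = 1 := by
  refine eq_of_forall_X_pow_dvd_sub fun K => ?_
  simpa [coeff_zero_qPochhammer] using hF K 0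

theorem one_sub_X_pow_mul_coeff_succ_of_qPochhammer_limit (m : ℕ) :
    (1 - X ^ (m + 1)) * coeff (m + 1) F = -(X ^ m * coeff m F) := by
  refine eq_of_forall_X_pow_dvd_sub fun K => ?_
  have split : (1 - X ^ (m + 1)) * coeff (m + 1) F - -(X ^ m * coeff m F) =
      (coeff (m + 1) F - coeff (m + 1) (qPochhammer R (K + 1))) -
        X ^ (m + 1) * (coeff (m + 1) F - coeff (m + 1) (qPochhammer R K)) +
        X ^ m * (coeff m F - coeff m (qPochhammer R K)) := by
    rw [coeff_succ_qPochhammer_succ]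
    ring
  rw [split]
  exact dvd_add (dvd_sub ((pow_dvd_pow X K.le_succ).trans (hF _ _)) ((hF _ _).mul_left _))
    ((hF _ _).mul_left _)

theorem prod_one_sub_X_pow_mul_coeff_of_qPochhammer_limit (m : ℕ) :
    (∏ j ∈ Icc 1 m, (1 - X ^ j)) * coeff m F = (-1) ^ m * X ^ (m * (m - 1) / 2) := by
  induction m with
  | zero => simp [coeff_zero_eq_one_of_qPochhammer_limit hF]
  | succ m ih =>
    rw [prod_Icc_succ_top (Nat.le_add_left 1 m), mul_assoc,
      one_sub_X_pow_mul_coeff_succ_of_qPochhammer_limit hF, Nat.triangle_succ]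
    linear_combination (-X ^ m) * ih

end Limit

end PowerSeries

/-- **Euler's identity** `(x;q)_∞ = Σ_{m≥0} (−1)^m q^{m(m−1)/2} x^m / (q)_m`.
We work in `ℤ[[q]][[x]]`, i.e. power series in `x` whose coefficients are power
series in `q`.  The infinite product `F = ∏_{k=0}^∞ (1 − x q^k)` is characterized by
the fact that each coefficient (of `x^m q^d`) agrees with that of the partial products
`∏_{k<K} (1 − x q^k)` as soon as `d < K`.  The identity is stated with denominators
cleared: for every `m`, `(q)_m · [x^m] F = (−1)^m q^{m(m−1)/2}`. -/
theorem euler_pochhammer_expansion (F : PowerSeries (PowerSeries ℤ))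
    (hF : ∀ K m d : ℕ, d < K →
      PowerSeries.coeff (R := ℤ) d (PowerSeries.coeff (R := PowerSeries ℤ) m F) =
        PowerSeries.coeff (R := ℤ) d (PowerSeries.coeff (R := PowerSeries ℤ) m
          (∏ k ∈ Finset.range K,
            (1 - PowerSeries.C (R := PowerSeries ℤ) (PowerSeries.X ^ k) * PowerSeries.X)))) :
    ∀ m : ℕ,
      (∏ j ∈ Finset.Icc 1 m, (1 - (PowerSeries.X : PowerSeries ℤ) ^ j)) *
          PowerSeries.coeff (R := PowerSeries ℤ) m F =
        (-1) ^ m * (PowerSeries.X : PowerSeries ℤ) ^ (m * (m - 1) / 2) :=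
  prod_one_sub_X_pow_mul_coeff_of_qPochhammer_limit fun K m =>
    X_pow_dvd_iff.mpr fun d hd => by rw [map_sub, hF K m d hd, qPochhammer, sub_self]
end

section
/- For the half-BPS case f(q) = q (so f̂(q) = Σ_{n≥1} q^n), the one-giant kernel K̂(ζ,q) = (1/((1−ζ)(1−1/ζ))) ∏_{n≥1} (1−q^n)²/((1−q^nζ)(1−q^n/ζ)) equals K̂(ζ,q) = (q;q)_∞² / ((ζ;q)_∞ (ζ^{−1};q)_∞), and for N ≥ 1 the Laurent coefficient of ζ^{−N} in K̂(ζ,q) (expanding first in q, then in ζ) is a power series in q of order exactly N+1 whose leading term is −q^{N+1}, in agreement with the one-giant term. -/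
noncomputable section

namespace GiantKernel

/-- The ring of formal Laurent series in `ζ` (the expansion region is `|q|<|ζ|<1`:
`1/(1−ζ)` expands as `Σ_{j≥0} ζ^j`, which is its inverse in this field). -/
abbrev Zeta := LaurentSeries ℚ

/-- `ζ` as a Laurent series. -/
def ζ : Zeta := HahnSeries.single (1 : ℤ) (1 : ℚ)

/-- `ζ⁻¹ = 1/ζ` as a Laurent series. -/
def ζinv : Zeta := HahnSeries.single (-1 : ℤ) (1 : ℚ)

/-- The prefactor `1/((1−ζ)(1−1/ζ))`. -/
def pref : Zeta := ((1 - ζ) * (1 - ζinv))⁻¹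

/-- The `n`-th factor `(1−q^n)² / ((1−q^n ζ)(1−q^n/ζ))` of the one-giant kernel for
the half-BPS single letter (all multiplicities `â_n = 1`), as a power series in `q`
with Laurent-series coefficients. -/
def kernelFactor (n : ℕ) : PowerSeries Zeta :=
  (1 - PowerSeries.X ^ n) ^ 2 *
    ((1 - PowerSeries.C (R := Zeta) ζ * PowerSeries.X ^ n) *
      (1 - PowerSeries.C (R := Zeta) ζinv * PowerSeries.X ^ n))⁻¹

open PowerSeries

/-- lower bound on support -/
def HB (a : ℤ) (x : Zeta) : Prop := ∀ e : ℤ, e < a → x.coeff e = 0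

lemma HB.order_le {a : ℤ} {x : Zeta} (h : HB a x) (hx : x ≠ 0) : a ≤ x.order := by
  by_contra hlt
  push_neg at hlt
  exact (mt HahnSeries.coeff_order_eq_zero.mp hx) (h _ hlt)

lemma HB.mul {a b : ℤ} {x y : Zeta} (hx : HB a x) (hy : HB b y) : HB (a + b) (x * y) := by
  intro e he
  by_cases h0 : x = 0; · simp [h0]
  by_cases h1 : y = 0; · simp [h1]
  apply HahnSeries.coeff_eq_zero_of_lt_order
  rw [HahnSeries.order_mul h0 h1]
  exact lt_of_lt_of_le he (add_le_add (hx.order_le h0) (hy.order_le h1))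

lemma HB.mul_coeff {a b : ℤ} {x y : Zeta} (hx : HB a x) (hy : HB b y) :
    (x * y).coeff (a + b) = x.coeff a * y.coeff b := by
  by_cases h0 : x = 0; · simp [h0]
  by_cases h1 : y = 0; · simp [h1]
  rcases lt_or_eq_of_le (hx.order_le h0) with hlt | heq
  · rw [HahnSeries.coeff_eq_zero_of_lt_order hlt, zero_mul]
    apply HahnSeries.coeff_eq_zero_of_lt_order
    rw [HahnSeries.order_mul h0 h1]
    exact add_lt_add_of_lt_of_le hlt (hy.order_le h1)
  · rcases lt_or_eq_of_le (hy.order_le h1) with hlt' | heq'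
    · rw [HahnSeries.coeff_eq_zero_of_lt_order hlt', mul_zero]
      apply HahnSeries.coeff_eq_zero_of_lt_order
      rw [HahnSeries.order_mul h0 h1]
      exact add_lt_add_of_le_of_lt (hx.order_le h0) hlt'
    · rw [heq, heq', HahnSeries.coeff_mul_order_add_order x y,
        HahnSeries.leadingCoeff_eq, HahnSeries.leadingCoeff_eq]

lemma zeta_mul_zetainv : ζ * ζinv = 1 := by
  rw [ζ, ζinv, HahnSeries.single_mul_single]
  norm_num [HahnSeries.single_zero_one]

def s : Zeta := HahnSeries.ofPowerSeries ℤ ℚ ((1 - PowerSeries.X)⁻¹)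

lemma one_sub_zeta_mul_s : (1 - ζ) * s = 1 := by
  have h1 : (1 - ζ) = HahnSeries.ofPowerSeries ℤ ℚ (1 - PowerSeries.X) := by
    rw [map_sub, map_one, HahnSeries.ofPowerSeries_X, ζ]
  rw [h1, s, ← map_mul, PowerSeries.mul_inv_cancel, map_one]
  simp

lemma prod_mul_eq_one : ((1 - ζ) * (1 - ζinv)) * (-(ζ * (s * s))) = 1 := by
  have h2 : ζinv * ζ = 1 := by rw [mul_comm, zeta_mul_zetainv]
  calc ((1 - ζ) * (1 - ζinv)) * (-(ζ * (s * s)))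
      = (ζ * ζinv) * (((1 - ζ) * s) * ((1 - ζ) * s))
        + (1 - ζinv * ζ) * (-((1 - ζ) * ζ * (s * s))) := by ring
    _ = 1 := by rw [zeta_mul_zetainv, one_sub_zeta_mul_s, h2]; ring

lemma hne : (1 - ζ) * (1 - ζinv) ≠ 0 := left_ne_zero_of_mul_eq_one prod_mul_eq_one

lemma pref_eq : pref = -(ζ * (s * s)) := by
  have := inv_eq_of_mul_eq_one_right prod_mul_eq_one
  rw [pref, this]

lemma ofPS_coeff_neg (f : PowerSeries ℚ) {e : ℤ} (he : e < 0) :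
    (HahnSeries.ofPowerSeries ℤ ℚ f).coeff e = 0 := by
  rw [HahnSeries.ofPowerSeries_apply]
  apply HahnSeries.embDomain_notin_range
  rintro ⟨n, hn⟩
  have hn : ((n : ℕ) : ℤ) = e := hn
  omega

lemma zeta_mul_coeff (w : Zeta) (e : ℤ) : (ζ * w).coeff e = w.coeff (e - 1) := by
  have := HahnSeries.coeff_single_mul_add (r := (1:ℚ)) (x := w) (a := e - 1) (b := 1)
  simpa [ζ] using this

lemma pref_coeff_lt {e : ℤ} (he : e < 1) : pref.coeff e = 0 := by
  rw [pref_eq, HahnSeries.coeff_neg, zeta_mul_coeff, s, ← map_mul,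
    ofPS_coeff_neg _ (by omega), neg_zero]

lemma pref_coeff_one : pref.coeff 1 = -1 := by
  rw [pref_eq, HahnSeries.coeff_neg, zeta_mul_coeff, s, ← map_mul, sub_self,
    show ((0:ℤ)) = ((0:ℕ):ℤ) from rfl, HahnSeries.ofPowerSeries_apply_coeff]
  simp [PowerSeries.coeff_zero_eq_constantCoeff, PowerSeries.constantCoeff_inv]

lemma coeff_finsum {α : Type*} (t : Finset α) (f : α → Zeta) (e : ℤ) :
    (∑ i ∈ t, f i).coeff e = ∑ i ∈ t, (f i).coeff e :=
  map_sum (HahnSeries.coeff.addMonoidHom e) f t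

/-- weight bound: ζ-order + q-degree ≥ c -/
def W (c : ℤ) (F : PowerSeries Zeta) : Prop :=
  ∀ d : ℕ, HB (c - d) ((PowerSeries.coeff (R := Zeta) d) F)

lemma W.mul {c c' : ℤ} {F G : PowerSeries Zeta} (hF : W c F) (hG : W c' G) :
    W (c + c') (F * G) := by
  intro d e he
  rw [PowerSeries.coeff_mul, coeff_finsum]
  apply Finset.sum_eq_zero
  intro p hp
  have hd : p.1 + p.2 = d := Finset.HasAntidiagonal.mem_antidiagonal.mp hp
  refine HB.mul (hF p.1) (hG p.2) e ?_
  have : ((p.1 : ℤ)) + p.2 = d := by exact_mod_cast hd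
  omega

structure D (F : PowerSeries Zeta) : Prop where
  w : W 0 F
  c0 : PowerSeries.constantCoeff (R := Zeta) F = 1
  bd : ∀ d : ℕ, 0 < d → ((PowerSeries.coeff (R := Zeta) d) F).coeff (-(d : ℤ)) = 0

lemma D.mul {F G : PowerSeries Zeta} (hF : D F) (hG : D G) : D (F * G) := by
  refine ⟨by simpa using hF.w.mul hG.w, by simp [hF.c0, hG.c0], ?_⟩
  intro d hd
  rw [PowerSeries.coeff_mul, coeff_finsum]
  apply Finset.sum_eq_zero
  intro p hp
  have hsum : p.1 + p.2 = d := Finset.HasAntidiagonal.mem_antidiagonal.mp hp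
  have h1 : HB (-(p.1 : ℤ)) ((coeff (R := Zeta) p.1) F) := by simpa using hF.w p.1
  have h2 : HB (-(p.2 : ℤ)) ((coeff (R := Zeta) p.2) G) := by simpa using hG.w p.2
  have hcast : (-(d : ℤ)) = -(p.1 : ℤ) + -(p.2 : ℤ) := by
    have : ((p.1 : ℤ)) + p.2 = d := by exact_mod_cast hsum
    omega
  rw [hcast, HB.mul_coeff h1 h2]
  rcases Nat.eq_zero_or_pos p.1 with h | h
  · have h2' : p.2 = d := by omega
    rw [h2', hG.bd d hd, mul_zero]
  · rw [hF.bd p.1 h, zero_mul]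

lemma D.one : D 1 := by
  refine ⟨?_, by simp, ?_⟩
  · intro d e he
    rw [PowerSeries.coeff_one]
    split
    · rw [HahnSeries.coeff_one, if_neg (by omega)]
    · simp
  · intro d hd
    rw [PowerSeries.coeff_one, if_neg (by omega), HahnSeries.coeff_zero]

lemma D.prod {α : Type*} (t : Finset α) (f : α → PowerSeries Zeta)
    (h : ∀ i ∈ t, D (f i)) : D (∏ i ∈ t, f i) :=
  Finset.prod_induction f D (fun _ _ => D.mul) D.one h

/-- geometric series `(1 - a q^n)⁻¹` -/
def g (a : Zeta) (n : ℕ) : PowerSeries Zeta :=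
  PowerSeries.mk fun d => if n ∣ d then a ^ (d / n) else 0

lemma g_mul (a : Zeta) {n : ℕ} (hn : 0 < n) :
    (1 - PowerSeries.C (R := Zeta) a * PowerSeries.X ^ n) * g a n = 1 := by
  ext d : 1
  rw [sub_mul, one_mul, map_sub, mul_assoc, PowerSeries.coeff_C_mul,
    PowerSeries.coeff_X_pow_mul']
  simp only [g, PowerSeries.coeff_mk, PowerSeries.coeff_one]
  rcases Nat.eq_zero_or_pos d with rfl | hd
  · rw [if_pos (dvd_zero n), if_neg (show ¬ (n ≤ 0) by omega), if_pos (show (0:ℕ) = 0 from rfl)]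
    simp
  · rw [if_neg (show ¬ (d = 0) by omega)]
    by_cases hnd : n ≤ d
    · rw [if_pos hnd]
      by_cases hdvd : n ∣ d
      · have hdvd' : n ∣ d - n := Nat.dvd_sub hdvd dvd_rfl
        rw [if_pos hdvd, if_pos hdvd']
        obtain ⟨k, rfl⟩ := hdvd
        have hk : 0 < k := by
          rcases Nat.eq_zero_or_pos k with rfl | h
          · simp at hd
          · exact h
        have hs : n * k - n = n * (k - 1) := by
          rcases k with _ | k'
          · omega
          · simp [Nat.mul_succ]
        have hp : a ^ k = a * a ^ (k - 1) := by
          rw [← pow_succ']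
          congr 1
          omega
        rw [Nat.mul_div_cancel_left k hn, hs, Nat.mul_div_cancel_left _ hn, hp]
        ring
      · rw [if_neg hdvd, if_neg (show ¬ (n ∣ d - n) from fun hc => hdvd (by
          obtain ⟨k, hk⟩ := hc
          exact ⟨k + 1, by rw [Nat.mul_succ]; omega⟩))]
        simp
    · rw [if_neg hnd, if_neg (show ¬ (n ∣ d) from fun hc => hnd (Nat.le_of_dvd hd hc))]
      simp

lemma zeta_pow (m : ℕ) : ζ ^ m = HahnSeries.single ((m : ℤ)) (1 : ℚ) := by
  rw [ζ, HahnSeries.single_pow, one_pow, nsmul_eq_mul, mul_one]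

lemma zetainv_pow (m : ℕ) : ζinv ^ m = HahnSeries.single (-(m : ℤ)) (1 : ℚ) := by
  rw [ζinv, HahnSeries.single_pow, one_pow, nsmul_eq_mul]
  norm_num

lemma coeff_g_zeta (n d : ℕ) :
    (coeff (R := Zeta) d) (g ζ n) = if n ∣ d then HahnSeries.single ((d / n : ℕ) : ℤ) (1 : ℚ) else 0 := by
  rw [g, coeff_mk]
  split <;> [rw [zeta_pow]; rfl]

lemma coeff_g_zetainv (n d : ℕ) :
    (coeff (R := Zeta) d) (g ζinv n) = if n ∣ d then HahnSeries.single (-((d / n : ℕ) : ℤ)) (1 : ℚ) else 0 := by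
  rw [g, coeff_mk]
  split <;> [rw [zetainv_pow]; rfl]

lemma D_g_zeta {n : ℕ} (hn : 0 < n) : D (g ζ n) := by
  refine ⟨?_, ?_, ?_⟩
  · intro d e he
    rw [coeff_g_zeta]
    split
    · exact HahnSeries.coeff_single_of_ne (by have := Nat.zero_le (d / n); omega)
    · rfl
  · rw [← PowerSeries.coeff_zero_eq_constantCoeff, coeff_g_zeta, if_pos (dvd_zero n)]
    norm_num [HahnSeries.single_zero_one]
  · intro d hd
    rw [coeff_g_zeta]
    split
    · exact HahnSeries.coeff_single_of_ne (by have := Nat.zero_le (d / n); omega)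
    · rfl

lemma D_g_zetainv {n : ℕ} (hn : 2 ≤ n) : D (g ζinv n) := by
  refine ⟨?_, ?_, ?_⟩
  · intro d e he
    rw [coeff_g_zetainv]
    split
    · refine HahnSeries.coeff_single_of_ne ?_
      have := Nat.div_le_self d n
      omega
    · rfl
  · rw [← PowerSeries.coeff_zero_eq_constantCoeff, coeff_g_zetainv, if_pos (dvd_zero n)]
    norm_num [HahnSeries.single_zero_one]
  · intro d hd
    rw [coeff_g_zetainv]
    split
    · refine HahnSeries.coeff_single_of_ne ?_
      have : d / n < d := Nat.div_lt_self hd (by omega)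
      omega
    · rfl

lemma coeff_g_zetainv_one (d : ℕ) :
    (coeff (R := Zeta) d) (g ζinv 1) = HahnSeries.single (-(d : ℤ)) (1 : ℚ) := by
  rw [coeff_g_zetainv, if_pos (one_dvd d), Nat.div_one]

lemma W_g_zetainv_one : W 0 (g ζinv 1) := by
  intro d e he
  rw [coeff_g_zetainv_one]
  exact HahnSeries.coeff_single_of_ne (by omega)

lemma D_one_sub_X_pow {n : ℕ} (hn : 0 < n) : D (1 - PowerSeries.X ^ n) := by
  refine ⟨?_, ?_, ?_⟩
  · intro d e he
    rw [map_sub, PowerSeries.coeff_one, PowerSeries.coeff_X_pow, HahnSeries.coeff_sub]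
    have h1 : ∀ b : Prop, ∀ _ : Decidable b, (if b then (1 : Zeta) else 0).coeff e = 0 := by
      intro b _
      split
      · rw [HahnSeries.coeff_one, if_neg (by omega)]
      · rfl
    rw [h1, h1, sub_zero]
  · simp [zero_pow hn.ne']
  · intro d hd
    rw [map_sub, PowerSeries.coeff_one, PowerSeries.coeff_X_pow, HahnSeries.coeff_sub]
    have h1 : ∀ b : Prop, ∀ _ : Decidable b, (if b then (1 : Zeta) else 0).coeff (-(d:ℤ)) = 0 := by
      intro b _
      split
      · rw [HahnSeries.coeff_one, if_neg (by omega)]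
      · rfl
    rw [h1, h1, sub_zero]

lemma kernelFactor_eq {n : ℕ} (hn : 0 < n) :
    kernelFactor n = (1 - PowerSeries.X ^ n) ^ 2 * (g ζ n * g ζinv n) := by
  rw [kernelFactor]
  congr 1
  rw [PowerSeries.inv_eq_iff_mul_eq_one]
  · calc (g ζ n * g ζinv n) *
        ((1 - PowerSeries.C (R := Zeta) ζ * PowerSeries.X ^ n) *
          (1 - PowerSeries.C (R := Zeta) ζinv * PowerSeries.X ^ n))
        = ((1 - PowerSeries.C (R := Zeta) ζ * PowerSeries.X ^ n) * g ζ n) *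
          ((1 - PowerSeries.C (R := Zeta) ζinv * PowerSeries.X ^ n) * g ζinv n) := by ring
      _ = 1 := by rw [g_mul ζ hn, g_mul ζinv hn, one_mul]
  · simp [zero_pow hn.ne']

lemma D_kernelFactor {n : ℕ} (hn : 2 ≤ n) : D (kernelFactor n) := by
  rw [kernelFactor_eq (by omega), sq]
  exact (((D_one_sub_X_pow (by omega)).mul (D_one_sub_X_pow (by omega))).mul
    ((D_g_zeta (by omega)).mul (D_g_zetainv hn)))

lemma key (M : ℕ) :
    (PowerSeries.C (R := Zeta) pref * ∏ n ∈ Finset.Icc 1 M, kernelFactor n) *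
      ∏ k ∈ Finset.range (M + 1),
        ((1 - PowerSeries.C (R := Zeta) ζ * PowerSeries.X ^ k) *
          (1 - PowerSeries.C (R := Zeta) ζinv * PowerSeries.X ^ k)) =
    (∏ n ∈ Finset.Icc 1 M, (1 - PowerSeries.X ^ n)) ^ 2 := by
  have hins : Finset.range (M + 1) = insert 0 (Finset.Icc 1 M) := by
    ext x
    simp only [Finset.mem_range, Finset.mem_insert, Finset.mem_Icc]
    omega
  rw [hins, Finset.prod_insert (by simp)]
  have hf0 : (1 - PowerSeries.C (R := Zeta) ζ * PowerSeries.X ^ 0) *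
      (1 - PowerSeries.C (R := Zeta) ζinv * PowerSeries.X ^ 0)
      = PowerSeries.C (R := Zeta) ((1 - ζ) * (1 - ζinv)) := by
    rw [pow_zero, mul_one, mul_one, map_mul, map_sub, map_sub, map_one]
  have hfac : ∀ n ∈ Finset.Icc 1 M, kernelFactor n *
      ((1 - PowerSeries.C (R := Zeta) ζ * PowerSeries.X ^ n) *
        (1 - PowerSeries.C (R := Zeta) ζinv * PowerSeries.X ^ n))
      = (1 - PowerSeries.X ^ n) ^ 2 := by
    intro n hn
    have hn1 : 0 < n := by
      have := (Finset.mem_Icc.mp hn).1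
      omega
    rw [kernelFactor, mul_assoc, PowerSeries.inv_mul_cancel _ (by simp [zero_pow hn1.ne']),
      mul_one]
  calc (PowerSeries.C (R := Zeta) pref * ∏ n ∈ Finset.Icc 1 M, kernelFactor n) *
      (((1 - PowerSeries.C (R := Zeta) ζ * PowerSeries.X ^ 0) *
        (1 - PowerSeries.C (R := Zeta) ζinv * PowerSeries.X ^ 0)) *
      ∏ k ∈ Finset.Icc 1 M,
        ((1 - PowerSeries.C (R := Zeta) ζ * PowerSeries.X ^ k) *
          (1 - PowerSeries.C (R := Zeta) ζinv * PowerSeries.X ^ k)))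
      = (PowerSeries.C (R := Zeta) pref *
          ((1 - PowerSeries.C (R := Zeta) ζ * PowerSeries.X ^ 0) *
            (1 - PowerSeries.C (R := Zeta) ζinv * PowerSeries.X ^ 0))) *
        ∏ n ∈ Finset.Icc 1 M, (kernelFactor n *
          ((1 - PowerSeries.C (R := Zeta) ζ * PowerSeries.X ^ n) *
            (1 - PowerSeries.C (R := Zeta) ζinv * PowerSeries.X ^ n))) := by
        simp only [Finset.prod_mul_distrib]
        ring
    _ = (∏ n ∈ Finset.Icc 1 M, (1 - PowerSeries.X ^ n)) ^ 2 := by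
        rw [Finset.prod_congr rfl hfac, hf0, ← map_mul, pref, inv_mul_cancel₀ hne, map_one, one_mul,
          Finset.prod_pow]

lemma W_C_pref : W 1 (PowerSeries.C (R := Zeta) pref) := by
  intro d e he
  rw [PowerSeries.coeff_C]
  split
  · next h => exact pref_coeff_lt (by omega)
  · rw [HahnSeries.coeff_zero]

lemma hD1 : D (1 - PowerSeries.X : PowerSeries Zeta) := by
  have := D_one_sub_X_pow (n := 1) one_pos
  simpa using this

/-- **The half-BPS one-giant kernel.**
For `f(q) = q` (so `f̂(q) = Σ_{n≥1} q^n`), the one-giant kernel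
`K̂(ζ,q) = (1/((1−ζ)(1−1/ζ))) ∏_{n≥1} (1−q^n)²/((1−q^nζ)(1−q^n/ζ))`
(encoded as a `q`-power series `K` with Laurent-series coefficients, characterized by
stabilization of the partial products) equals
`(q;q)_∞² / ((ζ;q)_∞ (ζ⁻¹;q)_∞)`: coefficientwise,
`K · ∏_{k=0}^{M} (1−ζq^k)(1−ζ⁻¹q^k)` agrees with `(∏_{n=1}^M (1−q^n))²` up to degree
`M`.  Moreover, for `N ≥ 1`, the coefficient of `ζ^{−N}` in `K` (collecting the
`q`-expansion into a `q`-series) is a power series of order exactly `N+1` whose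
leading term is `−q^{N+1}`. -/
theorem halfBPS_one_giant_kernel (K : PowerSeries Zeta)
    (hK : ∀ M : ℕ, ∀ d ≤ M,
      PowerSeries.coeff (R := Zeta) d K =
        PowerSeries.coeff (R := Zeta) d
          (PowerSeries.C (R := Zeta) pref * ∏ n ∈ Finset.Icc 1 M, kernelFactor n)) :
    (∀ M : ℕ, ∀ d ≤ M,
      PowerSeries.coeff (R := Zeta) d
          (K * ∏ k ∈ Finset.range (M + 1),
            ((1 - PowerSeries.C (R := Zeta) ζ * PowerSeries.X ^ k) *
              (1 - PowerSeries.C (R := Zeta) ζinv * PowerSeries.X ^ k))) =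
        PowerSeries.coeff (R := Zeta) d ((∏ n ∈ Finset.Icc 1 M, (1 - PowerSeries.X ^ n)) ^ 2)) ∧
    ∀ N : ℕ, 1 ≤ N →
      (∀ d ≤ N, (PowerSeries.coeff (R := Zeta) d K).coeff (-(N : ℤ)) = 0) ∧
      (PowerSeries.coeff (R := Zeta) (N + 1) K).coeff (-(N : ℤ)) = -1 := by
  constructor
  · intro M d hd
    have h1 : PowerSeries.coeff (R := Zeta) d
        (K * ∏ k ∈ Finset.range (M + 1),
          ((1 - PowerSeries.C (R := Zeta) ζ * PowerSeries.X ^ k) *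
            (1 - PowerSeries.C (R := Zeta) ζinv * PowerSeries.X ^ k))) =
        PowerSeries.coeff (R := Zeta) d
        ((PowerSeries.C (R := Zeta) pref * ∏ n ∈ Finset.Icc 1 M, kernelFactor n) *
          ∏ k ∈ Finset.range (M + 1),
            ((1 - PowerSeries.C (R := Zeta) ζ * PowerSeries.X ^ k) *
              (1 - PowerSeries.C (R := Zeta) ζinv * PowerSeries.X ^ k))) := by
      rw [PowerSeries.coeff_mul, PowerSeries.coeff_mul]
      apply Finset.sum_congr rfl
      intro p hp
      have hsum := Finset.HasAntidiagonal.mem_antidiagonal.mp hp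
      rw [hK M p.1 (by omega)]
    rw [h1, key]
  · intro N hN
    have hIcc : Finset.Icc 1 (N + 1) = insert 1 (Finset.Icc 2 (N + 1)) := by
      ext x
      simp only [Finset.mem_insert, Finset.mem_Icc]
      omega
    have hprod : PowerSeries.C (R := Zeta) pref * ∏ n ∈ Finset.Icc 1 (N + 1), kernelFactor n
        = PowerSeries.C (R := Zeta) pref * (g ζinv 1 *
            ((1 - PowerSeries.X) ^ 2 * g ζ 1 * ∏ n ∈ Finset.Icc 2 (N + 1), kernelFactor n)) := by
      rw [hIcc, Finset.prod_insert (by simp), kernelFactor_eq one_pos]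
      ring
    have hDH : D ((1 - PowerSeries.X) ^ 2 * g ζ 1 *
        ∏ n ∈ Finset.Icc 2 (N + 1), kernelFactor n) := by
      rw [sq]
      exact ((hD1.mul hD1).mul (D_g_zeta one_pos)).mul
        (D.prod _ _ fun i hi => D_kernelFactor (Finset.mem_Icc.mp hi).1)
    have hWQ : W 0 (g ζinv 1 * ((1 - PowerSeries.X) ^ 2 * g ζ 1 *
        ∏ n ∈ Finset.Icc 2 (N + 1), kernelFactor n)) := by
      simpa using W_g_zetainv_one.mul hDH.w
    have hWtot : W 1 (PowerSeries.C (R := Zeta) pref * (g ζinv 1 *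
        ((1 - PowerSeries.X) ^ 2 * g ζ 1 * ∏ n ∈ Finset.Icc 2 (N + 1), kernelFactor n))) := by
      simpa using W_C_pref.mul hWQ
    constructor
    · intro d hd
      rw [hK (N + 1) d (by omega), hprod]
      exact hWtot d (-(N : ℤ)) (by omega)
    · rw [hK (N + 1) (N + 1) le_rfl, hprod, PowerSeries.coeff_C_mul]
      have hbp : HB 1 pref := fun e he => pref_coeff_lt he
      have hbQ : HB (-(N : ℤ) - 1) ((PowerSeries.coeff (R := Zeta) (N + 1)) (g ζinv 1 *
          ((1 - PowerSeries.X) ^ 2 * g ζ 1 * ∏ n ∈ Finset.Icc 2 (N + 1), kernelFactor n))) := by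
        intro e he
        exact hWQ (N + 1) e (by push_cast; omega)
      have hQ : ((PowerSeries.coeff (R := Zeta) (N + 1)) (g ζinv 1 *
          ((1 - PowerSeries.X) ^ 2 * g ζ 1 * ∏ n ∈ Finset.Icc 2 (N + 1), kernelFactor n))).coeff
            (-(N : ℤ) - 1) = 1 := by
        rw [PowerSeries.coeff_mul, coeff_finsum]
        have hmem : ((N + 1 : ℕ), (0 : ℕ)) ∈ Finset.HasAntidiagonal.antidiagonal (N + 1) := by
          simp
        have hzero : ∀ p ∈ Finset.HasAntidiagonal.antidiagonal (N + 1), p ≠ ((N + 1 : ℕ), (0 : ℕ)) →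
            (((PowerSeries.coeff (R := Zeta) p.1) (g ζinv 1)) *
              ((PowerSeries.coeff (R := Zeta) p.2) ((1 - PowerSeries.X) ^ 2 * g ζ 1 *
                ∏ n ∈ Finset.Icc 2 (N + 1), kernelFactor n))).coeff (-(N : ℤ) - 1) = 0 := by
          intro p hp hne
          obtain ⟨p1, p2⟩ := p
          have hsum : p1 + p2 = N + 1 := Finset.HasAntidiagonal.mem_antidiagonal.mp hp
          have hp2 : 0 < p2 := by
            rcases Nat.eq_zero_or_pos p2 with h0 | h
            · exact absurd (by rw [show p1 = N + 1 by omega, h0]) hne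
            · exact h
          have h1 : HB (-(p1 : ℤ)) ((PowerSeries.coeff (R := Zeta) p1) (g ζinv 1)) := by
            intro e he
            rw [coeff_g_zetainv_one]
            exact HahnSeries.coeff_single_of_ne (by omega)
          have h2 : HB (-(p2 : ℤ)) ((PowerSeries.coeff (R := Zeta) p2) ((1 - PowerSeries.X) ^ 2 * g ζ 1 *
              ∏ n ∈ Finset.Icc 2 (N + 1), kernelFactor n)) := by
            simpa using hDH.w p2
          have hcast : (-(N : ℤ) - 1) = -(p1 : ℤ) + -(p2 : ℤ) := by
            have : (p1 : ℤ) + p2 = (N : ℤ) + 1 := by exact_mod_cast hsum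
            omega
          rw [hcast, HB.mul_coeff h1 h2, hDH.bd p2 hp2, mul_zero]
        rw [Finset.sum_eq_single_of_mem _ hmem hzero, coeff_g_zetainv_one,
          PowerSeries.coeff_zero_eq_constantCoeff_apply, hDH.c0, mul_one]
        rw [show (-(N : ℤ) - 1) = (-((N + 1 : ℕ) : ℤ)) by push_cast; ring]
        exact HahnSeries.coeff_single_same _ _
      have hco : (1 : ℤ) + (-(N : ℤ) - 1) = -(N : ℤ) := by ring
      rw [← hco, HB.mul_coeff hbp hbQ, pref_coeff_one, hQ]
      norm_num


end GiantKernel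

end
end
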